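/- arXiv:2209.01451 — 4 statements merged into one kernel-verified Lean document; each statement's English description precedes it below -/
import Mathlib

section
/- Every injective polynomial mapping F : ℂⁿ → ℂⁿ is a polynomial automorphism: F is bijective and there exists a polynomial mapping G : ℂⁿ → ℂⁿ with G ∘ F = id and F ∘ G = id. -/
open MvPolynomial
set_option maxHeartbeats 2000000
set_option synthInstance.maxHeartbeats 400000

noncomputable section Stmt4Aux

/-- Key Nullstellensatz identity from injectivity. -/
theorem stmt4_key {n : ℕ} (P : Fin n → MvPolynomial (Fin n) ℂ)
    (hinj : Function.Injective (fun z : Fin n → ℂ => fun i => eval z (P i))) (i : Fin n) :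
    ∃ (N : ℕ) (H : Fin n → MvPolynomial (Fin n ⊕ Fin n) ℂ),
      (X (Sum.inl i) - X (Sum.inr i) : MvPolynomial (Fin n ⊕ Fin n) ℂ) ^ N
        = ∑ j, H j * (rename Sum.inl (P j) - rename Sum.inr (P j)) := by
  set I : Ideal (MvPolynomial (Fin n ⊕ Fin n) ℂ) :=
    Ideal.span (Set.range fun j => rename Sum.inl (P j) - rename Sum.inr (P j)) with hI
  have hmem : (X (Sum.inl i) - X (Sum.inr i) : MvPolynomial (Fin n ⊕ Fin n) ℂ)
      ∈ vanishingIdeal ℂ (zeroLocus ℂ I) := by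
    rw [mem_vanishingIdeal_iff]
    intro v hv
    have hfj : ∀ j, eval (v ∘ Sum.inl) (P j) = eval (v ∘ Sum.inr) (P j) := by
      intro j
      have := (mem_zeroLocus_iff.mp hv) _
        (Ideal.subset_span (Set.mem_range_self (f := fun j =>
          rename Sum.inl (P j) - rename Sum.inr (P j)) j))
      simpa [eval_rename, sub_eq_zero] using this
    have : (v ∘ Sum.inl) = (v ∘ Sum.inr) := hinj (funext hfj)
    have hvi := congrFun this i
    simp only [Function.comp_apply] at hvi
    simp [hvi, sub_eq_zero]
  rw [vanishingIdeal_zeroLocus_eq_radical, Ideal.mem_radical_iff] at hmem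
  obtain ⟨N, hN⟩ := hmem
  rw [hI] at hN
  obtain ⟨H, hH⟩ := (Submodule.mem_span_range_iff_exists_fun _).mp hN
  exact ⟨N, H, hH.symm⟩

/-- Pointwise consequence of the key identity, in any ℂ-algebra. -/
theorem stmt4_key_eval {n : ℕ} (P : Fin n → MvPolynomial (Fin n) ℂ)
    (hinj : Function.Injective (fun z : Fin n → ℂ => fun i => eval z (P i))) (i : Fin n) :
    ∃ N : ℕ, ∀ (R : Type) [CommRing R] [Algebra ℂ R] (x y : Fin n → R),
      (∀ j, aeval x (P j) = aeval y (P j)) → (x i - y i) ^ N = 0 := by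
  obtain ⟨N, H, hH⟩ := stmt4_key P hinj i
  refine ⟨N, fun R _ _ x y hxy => ?_⟩
  have := congrArg (aeval (R := ℂ) (Sum.elim x y)) hH
  simp only [map_pow, map_sub, map_sum, map_mul, aeval_X, aeval_rename,
    Sum.elim_comp_inl, Sum.elim_comp_inr, Sum.elim_inl, Sum.elim_inr] at this
  simp only [this]
  rw [Finset.sum_eq_zero]
  intro j _
  rw [show aeval x (P j) = aeval y (P j) from hxy j]
  ring

variable {n : ℕ} (P : Fin n → MvPolynomial (Fin n) ℂ)

local notation "Amv" => MvPolynomial (Fin n) ℂ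
local notation "Lf" => FractionRing (MvPolynomial (Fin n) ℂ)
local notation "Om" => AlgebraicClosure (FractionRing (MvPolynomial (Fin n) ℂ))

instance stmt4inst1 : IsScalarTower ℂ Lf Om :=
  IsScalarTower.of_algebraMap_eq (R := ℂ) (S := Lf) (A := Om) fun _ => rfl
instance stmt4inst2 : IsScalarTower Amv Lf Om :=
  IsScalarTower.of_algebraMap_eq (R := Amv) (S := Lf) (A := Om) fun _ => rfl
instance stmt4inst3 : IsScalarTower ℂ Amv Om :=
  IsScalarTower.of_algebraMap_eq fun c => by
    rw [IsScalarTower.algebraMap_apply Amv Lf Om,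
      ← IsScalarTower.algebraMap_apply ℂ Amv Lf,
      ← IsScalarTower.algebraMap_apply ℂ Lf Om]

theorem stmt4_iota_inj : Function.Injective (algebraMap Amv Om) := by
  rw [IsScalarTower.algebraMap_eq Amv Lf Om]
  exact (algebraMap Lf Om).injective.comp (IsFractionRing.injective Amv Lf)

theorem stmt4_aeval_zbar (p : Amv) :
    aeval (fun i => algebraMap Amv Om (X i)) p = algebraMap Amv Om p := by
  have h := MvPolynomial.aeval_unique (IsScalarTower.toAlgHom ℂ Amv Om)
  exact (DFunLike.congr_fun h.symm p :)

theorem stmt4_ratio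
    (hinj : Function.Injective (fun z : Fin n → ℂ => fun i => eval z (P i))) (i : Fin n) :
    ∃ r s : MvPolynomial (Fin n) ℂ,
      aeval P s ≠ 0 ∧ X i * aeval P s = aeval P r := by
  classical
  set zbar : Fin n → Om := fun i => algebraMap Amv Om (X i) with hzbar
  set FOm : Fin n → Om := fun j => algebraMap Amv Om (P j) with hFOm
  set K : IntermediateField ℂ Om := IntermediateField.adjoin ℂ (Set.range FOm) with hK
  set M : IntermediateField K Om := algebraicClosure K Om with hM
  haveI : IsAlgClosed M := (algebraicClosure.isAlgClosure K Om).isAlgClosed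
  have hFK : ∀ j, FOm j ∈ K := fun j =>
    IntermediateField.subset_adjoin ℂ _ (Set.mem_range_self j)
  have haz : ∀ p : Amv, aeval zbar p = algebraMap Amv Om p := stmt4_aeval_zbar
  -- the ring hom ℂ → M
  set cM : ℂ →+* M := (algebraMap K M).comp (algebraMap ℂ K) with hcM
  have hcomp : (algebraMap M Om).comp cM = algebraMap ℂ Om := by
    ext c
    rw [RingHom.comp_apply, hcM, RingHom.comp_apply,
      ← IsScalarTower.algebraMap_apply K M Om,
      ← IsScalarTower.algebraMap_apply ℂ K Om]
  -- elements of K, as elements of M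
  set FM : Fin n → M := fun j => algebraMap K M ⟨FOm j, hFK j⟩ with hFM
  have hFMOm : ∀ j, algebraMap M Om (FM j) = FOm j := by
    intro j
    rw [hFM, ← IsScalarTower.algebraMap_apply K M Om]
    rfl
  -- a solution of the system over M
  have exsol : ∃ ξ : Fin n → M, ∀ j, eval ξ (MvPolynomial.map cM (P j)) = FM j := by
    set J : Ideal (MvPolynomial (Fin n) M) :=
      Ideal.span (Set.range fun j => MvPolynomial.map cM (P j) - C (FM j)) with hJ
    have hne : zeroLocus M J ≠ ∅ := by
      intro hempty
      have hrad : J.radical = ⊤ := by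
        rw [← vanishingIdeal_zeroLocus_eq_radical (K := M), hempty, vanishingIdeal_empty]
      have hJtop : (1 : MvPolynomial (Fin n) M) ∈ J := by
        have h1 : (1 : MvPolynomial (Fin n) M) ∈ J.radical := by rw [hrad]; trivial
        obtain ⟨k, hk⟩ := Ideal.mem_radical_iff.mp h1
        simpa using hk
      rw [hJ] at hJtop
      obtain ⟨G, hG⟩ := (Submodule.mem_span_range_iff_exists_fun _).mp hJtop
      set ψ : MvPolynomial (Fin n) M →+* Om := eval₂Hom (algebraMap M Om) zbar with hψ
      have hψG := congrArg ψ hG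
      rw [map_sum, map_one] at hψG
      rw [Finset.sum_eq_zero (fun j _ => ?_)] at hψG
      · exact one_ne_zero hψG.symm
      · rw [smul_eq_mul, map_mul, map_sub]
        have h1 : ψ (MvPolynomial.map cM (P j)) = FOm j := by
          rw [hψ, coe_eval₂Hom, eval₂_map, hcomp, ← MvPolynomial.aeval_def, haz]
        have h2 : ψ (C (FM j)) = FOm j := by
          rw [hψ, coe_eval₂Hom, eval₂_C, hFMOm j]
        rw [h1, h2, sub_self, mul_zero]
    obtain ⟨ξ, hξ⟩ := Set.nonempty_iff_ne_empty.mpr hne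
    refine ⟨ξ, fun j => ?_⟩
    have h := (mem_zeroLocus_iff.mp hξ) _ (Ideal.subset_span (Set.mem_range_self j))
    rw [map_sub, aeval_C, Algebra.algebraMap_self, RingHom.id_apply, sub_eq_zero] at h
    exact h
  obtain ⟨ξ, hξ⟩ := exsol
  -- every zbar is in M
  have hzM : ∀ i', zbar i' ∈ M := by
    intro i'
    obtain ⟨N, hNkey⟩ := stmt4_key_eval P hinj i'
    have hyp : ∀ j, aeval (fun t => algebraMap M Om (ξ t)) (P j) = aeval zbar (P j) := by
      intro j
      have h1 : aeval (fun t => algebraMap M Om (ξ t)) (P j)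
          = algebraMap M Om (eval ξ (MvPolynomial.map cM (P j))) := by
        rw [eval_map, MvPolynomial.aeval_def, ← hcomp]
        exact (MvPolynomial.eval₂_comp_left (algebraMap M Om) cM ξ (P j)).symm
      rw [h1, hξ j, hFMOm j, haz]
    have h0 := hNkey Om (fun t => algebraMap M Om (ξ t)) zbar hyp
    have hx : algebraMap M Om (ξ i') - zbar i' = 0 := by
      rcases Nat.eq_zero_or_pos N with h | h
      · rw [h, pow_zero] at h0; exact absurd h0 one_ne_zero
      · exact pow_eq_zero_iff h.ne' |>.mp h0
    rw [sub_eq_zero] at hx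
    rw [← hx]
    exact (ξ i').2
  -- Omega is algebraic over K
  have hmemM : ∀ p : Amv, algebraMap Amv Om p ∈ M := by
    intro p
    rw [← haz p]
    induction p using MvPolynomial.induction_on with
    | C c =>
        rw [aeval_C, IsScalarTower.algebraMap_apply ℂ K Om]
        exact M.algebraMap_mem _
    | add p q hp hq => rw [map_add]; exact add_mem hp hq
    | mul_X p j hp => rw [map_mul, aeval_X]; exact mul_mem hp (hzM j)
  haveI halgMOm : Algebra.IsAlgebraic M Om := by
    set φ : Amv →+* M := RingHom.codRestrict (algebraMap Amv Om) M.toSubfield hmemM with hφ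
    have hφinj : Function.Injective φ := by
      intro a b hab
      exact stmt4_iota_inj (congrArg Subtype.val hab)
    set e : Lf →+* M := IsFractionRing.lift hφinj with he
    have hecomp : (algebraMap M Om).comp e = algebraMap Lf Om := by
      apply IsLocalization.ringHom_ext (nonZeroDivisors Amv)
      refine RingHom.ext fun x => ?_
      simp only [RingHom.comp_apply]
      rw [he, IsFractionRing.lift_algebraMap, ← IsScalarTower.algebraMap_apply Amv Lf Om]
      rfl
    constructor
    intro ω
    obtain ⟨q, hq0, hqz⟩ := (AlgebraicClosure.isAlgebraic Lf).isAlgebraic ω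
    refine ⟨q.map e, ?_, ?_⟩
    · exact (Polynomial.map_ne_zero_iff e.injective).mpr hq0
    · rw [Polynomial.aeval_def, Polynomial.eval₂_map, hecomp, ← Polynomial.aeval_def]
      exact hqz
  haveI halgKOm : Algebra.IsAlgebraic K Om := by
    haveI : Algebra.IsAlgebraic K M := (algebraicClosure.isAlgClosure K Om).isAlgebraic
    exact Algebra.IsAlgebraic.trans K M Om
  -- every zbar is in K
  haveI : CharZero K := charZero_of_injective_algebraMap (algebraMap ℂ K).injective
  have hzK : zbar i ∈ K := by
    have hint : IsIntegral K (zbar i) := hzM i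
    have hroot : ∀ β : Om, Polynomial.aeval β (minpoly K (zbar i)) = 0 → β = zbar i := by
      intro β hβ
      obtain ⟨σ, hσ⟩ := IntermediateField.exists_algHom_of_splits_of_aeval
        (F := K) (E := Om) (K := Om)
        (fun s => ⟨Algebra.IsIntegral.isIntegral s, IsAlgClosed.splits _⟩) hβ
      obtain ⟨N, hNkey⟩ := stmt4_key_eval P hinj i
      have hcomm : ∀ p : Amv, σ (aeval zbar p) = aeval (fun t => σ (zbar t)) p := by
        intro p
        have h := congrFun (congrArg DFunLike.coe
          (MvPolynomial.comp_aeval (φ := (σ.restrictScalars ℂ)) (f := zbar))) p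
        exact h
      have hyp : ∀ j, aeval (fun t => σ (zbar t)) (P j) = aeval zbar (P j) := by
        intro j
        rw [← hcomm (P j), haz (P j)]
        have hxK : algebraMap Amv Om (P j) = algebraMap K Om ⟨FOm j, hFK j⟩ := rfl
        rw [hxK, σ.commutes]
      have h0 := hNkey Om (fun t => σ (zbar t)) zbar hyp
      have hx : σ (zbar i) - zbar i = 0 := by
        rcases Nat.eq_zero_or_pos N with h | h
        · rw [h, pow_zero] at h0; exact absurd h0 one_ne_zero
        · exact pow_eq_zero_iff h.ne' |>.mp h0
      rw [sub_eq_zero] at hx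
      rw [← hσ, hx]
    set m := minpoly K (zbar i) with hm
    set mm := m.map (algebraMap K Om) with hmmdef
    have hmonic : m.Monic := minpoly.monic hint
    have hsep : m.Separable := (minpoly.irreducible hint).separable
    have hsq : Squarefree mm := hsep.map.squarefree
    have hsplitid : mm.Splits := by
      exact IsAlgClosed.splits mm
    have hprod : mm = (mm.roots.map fun a => Polynomial.X - Polynomial.C a).prod :=
      hsplitid.eq_prod_roots_of_monic (hmonic.map _)
    have hallroots : ∀ a ∈ mm.roots, a = zbar i := by
      intro a ha
      apply hroot
      have heval : Polynomial.eval a mm = 0 := Polynomial.isRoot_of_mem_roots ha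
      rw [Polynomial.aeval_def, ← Polynomial.eval_map]
      exact heval
    have hcard : mm.roots.card = mm.natDegree := Polynomial.splits_iff_card_roots.mp hsplitid
    have hrep : mm.roots = Multiset.replicate mm.natDegree (zbar i) := by
      rw [Multiset.eq_replicate]
      exact ⟨hcard, fun b hb => hallroots b hb⟩
    have hmm_eq : mm = (Polynomial.X - Polynomial.C (zbar i)) ^ mm.natDegree := by
      have h := hprod
      rw [hrep, Multiset.map_replicate, Multiset.prod_replicate] at h
      exact h
    have hle : mm.natDegree ≤ 1 := by
      by_contra hgt
      push_neg at hgt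
      have hdvd : (Polynomial.X - Polynomial.C (zbar i)) * (Polynomial.X - Polynomial.C (zbar i))
          ∣ mm := by
        rw [hmm_eq, ← pow_two]
        exact pow_dvd_pow _ hgt
      exact Polynomial.not_isUnit_X_sub_C _ (hsq _ hdvd)
    have hdegm : m.natDegree = 1 := by
      have hge : 0 < m.natDegree := minpoly.natDegree_pos hint
      have : mm.natDegree = m.natDegree := Polynomial.natDegree_map _
      omega
    have hmC : m = Polynomial.X + Polynomial.C (m.coeff 0) := hmonic.eq_X_add_C hdegm
    have h0 : Polynomial.aeval (zbar i) m = 0 := minpoly.aeval K (zbar i)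
    rw [hmC] at h0
    rw [map_add, Polynomial.aeval_X, Polynomial.aeval_C] at h0
    have : zbar i = algebraMap K Om (- m.coeff 0) := by
      rw [map_neg]
      linear_combination h0
    rw [this]
    exact SetLike.coe_mem (-m.coeff 0 : ↥K)
  -- extract the rational representation
  rw [hK, IntermediateField.mem_adjoin_range_iff] at hzK
  obtain ⟨r, s, hrs⟩ := hzK
  have hFr : ∀ t : Amv, aeval FOm t = algebraMap Amv Om (aeval P t) := by
    intro t
    have h := congrFun (congrArg (DFunLike.coe)
      (MvPolynomial.comp_aeval (φ := IsScalarTower.toAlgHom ℂ Amv Om) (f := P))) t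
    exact h.symm
  rw [hFr r, hFr s] at hrs
  by_cases hs0 : aeval P s = 0
  · exfalso
    rw [hs0] at hrs
    rw [map_zero, div_zero] at hrs
    refine MvPolynomial.X_ne_zero (R := ℂ) i (stmt4_iota_inj ?_)
    rw [map_zero]
    exact hrs
  · refine ⟨r, s, hs0, stmt4_iota_inj ?_⟩
    have hsne : algebraMap Amv Om (aeval P s) ≠ 0 := fun h => hs0 (stmt4_iota_inj (by rw [map_zero]; exact h))
    rw [eq_div_iff hsne] at hrs
    rw [map_mul]
    exact hrs

theorem stmt4_eval_aeval (z : Fin n → ℂ) (t : Amv) :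
    eval z (aeval P t) = eval (fun j => eval z (P j)) t := by
  induction t using MvPolynomial.induction_on with
  | C c => simp
  | add p q hp hq => rw [map_add, map_add, hp, hq, map_add]
  | mul_X p j hp => rw [map_mul, aeval_X, eval_mul, eval_mul, eval_X, hp]

theorem stmt4_descent (hsurj : Function.Surjective (fun z : Fin n → ℂ => fun i => eval z (P i)))
    (i : Fin n) :
    ∀ s : Amv, aeval P s ≠ 0 → ∀ r : Amv, X i * aeval P s = aeval P r →
      ∃ Q : Amv, aeval P Q = X i := by
  intro s
  induction s using UniqueFactorizationMonoid.induction_on_prime with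
  | h₁ => intro h0 _ _; exact absurd (map_zero (aeval P)) h0
  | h₂ u hu =>
      intro hne r heq
      obtain ⟨v, hv⟩ := hu.exists_right_inv
      refine ⟨r * v, ?_⟩
      rw [map_mul, ← heq, mul_assoc, ← map_mul, hv, map_one, mul_one]
  | h₃ a p ha0 hp ih =>
      intro hne r heq
      by_cases hdvd : p ∣ r
      · obtain ⟨r', hr'⟩ := hdvd
        have hpne : aeval P p ≠ 0 := fun h => hne (by rw [map_mul, h, zero_mul])
        have hane : aeval P a ≠ 0 := fun h => hne (by rw [map_mul, h, mul_zero])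
        refine ih hane r' (mul_left_cancel₀ hpne ?_)
        rw [hr', map_mul, map_mul] at heq
        calc aeval P p * (X i * aeval P a) = X i * (aeval P p * aeval P a) := by ring
        _ = aeval P p * aeval P r' := heq
      · exfalso
        have hZ : ¬ ∀ x : Fin n → ℂ, eval x p = 0 → eval x r = 0 := by
          intro hall
          have hrV : r ∈ vanishingIdeal ℂ (zeroLocus ℂ (Ideal.span {p})) := by
            rw [mem_vanishingIdeal_iff]
            intro x hx
            exact hall x (by simpa using (mem_zeroLocus_iff.mp hx) p (Ideal.subset_span rfl))
          rw [vanishingIdeal_zeroLocus_eq_radical, Ideal.mem_radical_iff] at hrV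
          obtain ⟨k, hk⟩ := hrV
          rw [Ideal.mem_span_singleton] at hk
          exact hdvd (hp.dvd_of_dvd_pow hk)
        push_neg at hZ
        obtain ⟨x₀, hx₀p, hx₀r⟩ := hZ
        obtain ⟨z₀, hz₀⟩ := hsurj x₀
        have hF : (fun j => eval z₀ (P j)) = x₀ := hz₀
        have heval := congrArg (eval z₀) heq
        rw [eval_mul, stmt4_eval_aeval, stmt4_eval_aeval, hF, map_mul, hx₀p, zero_mul,
          mul_zero] at heval
        exact hx₀r heval.symm

theorem stmt4_main
    (hinj : Function.Injective (fun z : Fin n → ℂ => fun i => eval z (P i))) :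
    Function.Bijective (fun z : Fin n → ℂ => fun i => eval z (P i)) ∧
    ∃ Q : Fin n → MvPolynomial (Fin n) ℂ,
      (fun z : Fin n → ℂ => fun i => eval z (Q i)) ∘
          (fun z : Fin n → ℂ => fun i => eval z (P i)) = id ∧
      (fun z : Fin n → ℂ => fun i => eval z (P i)) ∘
          (fun z : Fin n → ℂ => fun i => eval z (Q i)) = id := by
  have hsurj : Function.Surjective (fun z : Fin n → ℂ => fun i => eval z (P i)) :=
    ax_grothendieck_univ P hinj
  refine ⟨⟨hinj, hsurj⟩, ?_⟩
  have hQi : ∀ i, ∃ Q : MvPolynomial (Fin n) ℂ, aeval P Q = X i := by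
    intro i
    obtain ⟨r, s, hs, heq⟩ := stmt4_ratio P hinj i
    exact stmt4_descent P hsurj i s hs r heq
  choose Q hQ using hQi
  have hGF : (fun z : Fin n → ℂ => fun i => eval z (Q i)) ∘
      (fun z : Fin n → ℂ => fun i => eval z (P i)) = id := by
    funext z
    funext i
    show eval (fun j => eval z (P j)) (Q i) = z i
    rw [← stmt4_eval_aeval, hQ i, eval_X]
  refine ⟨Q, hGF, ?_⟩
  funext w
  obtain ⟨z, hz⟩ := hsurj w
  show (fun z : Fin n → ℂ => fun i => eval z (P i))
    ((fun w : Fin n → ℂ => fun i => eval w (Q i)) w) = w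
  rw [← hz]
  have h1 : (fun z : Fin n → ℂ => fun i => eval z (Q i))
      ((fun z : Fin n → ℂ => fun i => eval z (P i)) z) = z := congrFun hGF z
  rw [h1]

end Stmt4Aux

/-- Every injective polynomial mapping F : ℂⁿ → ℂⁿ is a polynomial
automorphism: F is bijective and there is a polynomial mapping G with G ∘ F = id and
F ∘ G = id. -/
theorem stmt_4 (n : ℕ) (P : Fin n → MvPolynomial (Fin n) ℂ)
    (hinj : Function.Injective (fun z : Fin n → ℂ => fun i => eval z (P i))) :
    Function.Bijective (fun z : Fin n → ℂ => fun i => eval z (P i)) ∧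
    ∃ Q : Fin n → MvPolynomial (Fin n) ℂ,
      (fun z : Fin n → ℂ => fun i => eval z (Q i)) ∘
          (fun z : Fin n → ℂ => fun i => eval z (P i)) = id ∧
      (fun z : Fin n → ℂ => fun i => eval z (P i)) ∘
          (fun z : Fin n → ℂ => fun i => eval z (Q i)) = id :=
  stmt4_main P hinj
end

section
/- Fix n ≥ 1. If every polynomial mapping G : ℝ²ⁿ → ℝ²ⁿ whose Jacobian determinant is a nonzero constant is injective, then every polynomial mapping F : ℂⁿ → ℂⁿ whose Jacobian determinant is a nonzero constant is injective. (The real Jacobian conjecture in dimension 2n implies the complex Jacobian conjecture in dimension n.) -/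
open MvPolynomial Complex

noncomputable def reP {σ : Type*} (p : MvPolynomial σ ℂ) : MvPolynomial σ ℝ :=
  AddMonoidAlgebra.ofCoeff (Finsupp.mapRange Complex.re Complex.zero_re (AddMonoidAlgebra.coeff p))

noncomputable def imP {σ : Type*} (p : MvPolynomial σ ℂ) : MvPolynomial σ ℝ :=
  AddMonoidAlgebra.ofCoeff (Finsupp.mapRange Complex.im Complex.zero_im (AddMonoidAlgebra.coeff p))

lemma coeff_reP {σ : Type*} (p : MvPolynomial σ ℂ) (m : σ →₀ ℕ) :
    coeff m (reP p) = (coeff m p).re := rfl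
lemma coeff_imP {σ : Type*} (p : MvPolynomial σ ℂ) (m : σ →₀ ℕ) :
    coeff m (imP p) = (coeff m p).im := rfl

lemma reP_add {σ : Type*} (p q : MvPolynomial σ ℂ) : reP (p + q) = reP p + reP q := by
  apply MvPolynomial.ext; intro m; simp [coeff_reP, coeff_add]
lemma imP_add {σ : Type*} (p q : MvPolynomial σ ℂ) : imP (p + q) = imP p + imP q := by
  apply MvPolynomial.ext; intro m; simp [coeff_imP, coeff_add]

lemma reP_monomial {σ : Type*} (m : σ →₀ ℕ) (a : ℂ) :
    reP (monomial m a) = monomial m a.re := by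
  classical
  apply MvPolynomial.ext; intro m'
  rw [coeff_reP, coeff_monomial, coeff_monomial, apply_ite Complex.re, Complex.zero_re]
lemma imP_monomial {σ : Type*} (m : σ →₀ ℕ) (a : ℂ) :
    imP (monomial m a) = monomial m a.im := by
  classical
  apply MvPolynomial.ext; intro m'
  rw [coeff_imP, coeff_monomial, coeff_monomial, apply_ite Complex.im, Complex.zero_im]

lemma pderiv_reP {σ : Type*} (s : σ) (p : MvPolynomial σ ℂ) :
    pderiv s (reP p) = reP (pderiv s p) := by
  induction p using MvPolynomial.induction_on' with
  | monomial m a => simp [reP_monomial, pderiv_monomial]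
  | add p q hp hq => simp [reP_add, hp, hq]

lemma pderiv_imP {σ : Type*} (s : σ) (p : MvPolynomial σ ℂ) :
    pderiv s (imP p) = imP (pderiv s p) := by
  induction p using MvPolynomial.induction_on' with
  | monomial m a => simp [imP_monomial, pderiv_monomial]
  | add p q hp hq => simp [imP_add, hp, hq]

lemma map_reP_imP {σ : Type*} (p : MvPolynomial σ ℂ) :
    map Complex.ofRealHom (reP p) + C Complex.I * map Complex.ofRealHom (imP p) = p := by
  apply MvPolynomial.ext; intro m
  simp only [coeff_add, coeff_map, coeff_C_mul, coeff_reP, coeff_imP, ofRealHom_eq_coe]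
  apply Complex.ext <;> simp

lemma eval_map_ofReal {σ : Type*} (x : σ → ℝ) (q : MvPolynomial σ ℝ) :
    eval (fun s => (x s : ℂ)) (map Complex.ofRealHom q) = (eval x q : ℂ) := by
  rw [eval_map]
  induction q using MvPolynomial.induction_on with
  | C a => simp
  | add p q hp hq => simp [hp, hq]
  | mul_X p i hp => simp [hp]

lemma eval_reP {σ : Type*} (x : σ → ℝ) (p : MvPolynomial σ ℂ) :
    (eval x (reP p) : ℂ) = (eval (fun s => (x s : ℂ)) p).re ∧
    (eval x (imP p) : ℂ) = (eval (fun s => (x s : ℂ)) p).im := by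
  have h := congrArg (eval (fun s => (x s : ℂ))) (map_reP_imP p)
  simp only [map_add, map_mul, eval_C, eval_map_ofReal] at h
  constructor
  · rw [← h]; apply Complex.ext <;> simp
  · rw [← h]; apply Complex.ext <;> simp

noncomputable def phi {σ : Type*} : MvPolynomial σ ℂ →ₐ[ℂ] MvPolynomial (σ ⊕ σ) ℂ :=
  aeval (fun j => X (Sum.inl j) + C Complex.I * X (Sum.inr j))

lemma phi_X {σ : Type*} (i : σ) :
    phi (X i) = X (Sum.inl i) + C Complex.I * X (Sum.inr i) := by simp [phi]

lemma phi_C {σ : Type*} (a : ℂ) : phi (C a : MvPolynomial σ ℂ) = C a := by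
  simp [phi, algebraMap_eq]

lemma eval_phi {σ : Type*} (g : σ ⊕ σ → ℂ) (p : MvPolynomial σ ℂ) :
    eval g (phi p) = eval (fun j => g (Sum.inl j) + Complex.I * g (Sum.inr j)) p := by
  induction p using MvPolynomial.induction_on with
  | C a => simp [phi_C]
  | add p q hp hq => simp [hp, hq]
  | mul_X p i hp => rw [map_mul, phi_X]; simp [hp]

lemma pderiv_phi_X_inl {σ : Type*} [DecidableEq σ] (j i : σ) :
    pderiv (Sum.inl j) (phi (X i)) = phi (pderiv j (X i)) := by
  rw [phi_X]
  by_cases h : i = j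
  · subst h; simp
  · simp [pderiv_X_of_ne (fun hh => h (Sum.inl_injective hh)), Pi.single_eq_of_ne h]

lemma pderiv_phi_inl {σ : Type*} [DecidableEq σ] (j : σ) (p : MvPolynomial σ ℂ) :
    pderiv (Sum.inl j) (phi p) = phi (pderiv j p) := by
  induction p using MvPolynomial.induction_on with
  | C a => simp [phi_C, pderiv_C]
  | add p q hp hq => simp [hp, hq]
  | mul_X p i hp =>
      rw [map_mul, pderiv_mul, hp, pderiv_phi_X_inl, pderiv_mul, map_add, map_mul, map_mul]

lemma pderiv_phi_X_inr {σ : Type*} [DecidableEq σ] (j i : σ) :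
    pderiv (Sum.inr j) (phi (X i)) = C Complex.I * phi (pderiv j (X i)) := by
  rw [phi_X]
  by_cases h : i = j
  · subst h; simp
  · simp [pderiv_X_of_ne (fun hh => h (Sum.inr_injective hh)), Pi.single_eq_of_ne h]

lemma pderiv_phi_inr {σ : Type*} [DecidableEq σ] (j : σ) (p : MvPolynomial σ ℂ) :
    pderiv (Sum.inr j) (phi p) = C Complex.I * phi (pderiv j p) := by
  induction p using MvPolynomial.induction_on with
  | C a => simp [phi_C, pderiv_C]
  | add p q hp hq => simp [hp, hq, mul_add]
  | mul_X p i hp =>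
      rw [map_mul, pderiv_mul, hp, pderiv_phi_X_inr, pderiv_mul, map_add, map_mul, map_mul]
      ring

lemma det_blocks_c {m : Type*} [Fintype m] [DecidableEq m] (A B : Matrix m m ℂ) :
    (Matrix.fromBlocks A (-B) B A).det = (A + Complex.I • B).det * (A - Complex.I • B).det := by
  have key : (Matrix.fromBlocks 1 (Complex.I • 1) 0 1 : Matrix (m ⊕ m) (m ⊕ m) ℂ) *
      (Matrix.fromBlocks A (-B) B A) * (Matrix.fromBlocks 1 ((-Complex.I) • 1) 0 1) =
      Matrix.fromBlocks (A + Complex.I • B) 0 B (A - Complex.I • B) := by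
    rw [Matrix.fromBlocks_multiply, Matrix.fromBlocks_multiply]
    congr 1 <;>
      (simp only [Matrix.one_mul, Matrix.smul_mul, Matrix.mul_smul, Matrix.mul_one,
        Matrix.zero_mul, Matrix.mul_zero, add_zero, zero_add, smul_add, smul_smul,
        Complex.I_mul_I, neg_mul, mul_neg, neg_smul, one_smul, neg_neg, neg_one_smul,
        sub_eq_add_neg] <;> abel)
  have hdet := congrArg Matrix.det key
  rw [Matrix.det_mul, Matrix.det_mul, Matrix.det_fromBlocks_zero₂₁,
    Matrix.det_fromBlocks_zero₂₁, Matrix.det_fromBlocks_zero₁₂] at hdet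
  simpa using hdet

lemma det_blocks_r {m : Type*} [Fintype m] [DecidableEq m] (A B : Matrix m m ℝ) :
    (Matrix.fromBlocks A (-B) B A).det =
      Complex.normSq ((A.map (fun a => (a : ℂ)) + Complex.I • B.map (fun a => (a : ℂ))).det) := by
  have h1 : (Complex.ofRealHom) ((Matrix.fromBlocks A (-B) B A).det) =
      ((Matrix.fromBlocks A (-B) B A).map Complex.ofRealHom).det :=
    RingHom.map_det _ _
  rw [Matrix.fromBlocks_map] at h1
  have hneg : (-B).map (Complex.ofRealHom : ℝ → ℂ) = -(B.map Complex.ofRealHom) := by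
    ext i j; simp
  rw [hneg, det_blocks_c] at h1
  set A' := A.map (Complex.ofRealHom : ℝ → ℂ)
  set B' := B.map (Complex.ofRealHom : ℝ → ℂ)
  have hconj : A' - Complex.I • B' = (A' + Complex.I • B').map (starRingEnd ℂ) := by
    ext i j
    simp [A', B', Matrix.map_apply, sub_eq_add_neg]
  rw [hconj, ← RingHom.mapMatrix_apply, ← RingHom.map_det] at h1
  rw [Complex.mul_conj] at h1
  have hA' : A.map (fun a => (a : ℂ)) = A' := rfl
  have hB' : B.map (fun a => (a : ℂ)) = B' := rfl
  rw [hA', hB']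
  rw [ofRealHom_eq_coe] at h1
  exact_mod_cast h1

/-- Fix n ≥ 1. If every polynomial mapping ℝ²ⁿ → ℝ²ⁿ with nonzero constant
Jacobian determinant is injective, then every polynomial mapping ℂⁿ → ℂⁿ with nonzero
constant Jacobian determinant is injective. -/
theorem stmt_8 (n : ℕ) (hn : 1 ≤ n)
    (hreal : ∀ Q : Fin (2 * n) → MvPolynomial (Fin (2 * n)) ℝ, ∀ c : ℝ, c ≠ 0 →
      (∀ x : Fin (2 * n) → ℝ,
        Matrix.det (Matrix.of fun i j => eval x (pderiv j (Q i))) = c) →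
      Function.Injective (fun x : Fin (2 * n) → ℝ => fun i => eval x (Q i))) :
    ∀ P : Fin n → MvPolynomial (Fin n) ℂ, ∀ c : ℂ, c ≠ 0 →
      (∀ z : Fin n → ℂ,
        Matrix.det (Matrix.of fun i j => eval z (pderiv j (P i))) = c) →
      Function.Injective (fun z : Fin n → ℂ => fun i => eval z (P i)) := by
  classical
  intro P c hc hjac
  set e : (Fin n ⊕ Fin n) ≃ Fin (2 * n) := finSumFinEquiv.trans (finCongr (two_mul n).symm)
    with he
  set Q : Fin n ⊕ Fin n → MvPolynomial (Fin n ⊕ Fin n) ℝ :=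
    Sum.elim (fun i => reP (phi (P i))) (fun i => imP (phi (P i))) with hQ
  set Q' : Fin (2 * n) → MvPolynomial (Fin (2 * n)) ℝ :=
    fun k => rename e (Q (e.symm k)) with hQ'
  -- the Jacobian of Q over the sum index
  have hQjac : ∀ x : Fin n ⊕ Fin n → ℝ,
      Matrix.det (Matrix.of fun a b => eval x (pderiv b (Q a))) = Complex.normSq c := by
    intro x
    set z : Fin n → ℂ := fun j => (x (Sum.inl j) : ℂ) + Complex.I * (x (Sum.inr j)) with hz
    have hW : ∀ q : MvPolynomial (Fin n) ℂ,
        eval (fun s => (x s : ℂ)) (phi q) = eval z q := fun q => eval_phi _ q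
    have hM : (Matrix.of fun a b => eval x (pderiv b (Q a))) =
        Matrix.fromBlocks
          (Matrix.of fun i j => (eval z (pderiv j (P i))).re)
          (-(Matrix.of fun i j => (eval z (pderiv j (P i))).im))
          (Matrix.of fun i j => (eval z (pderiv j (P i))).im)
          (Matrix.of fun i j => (eval z (pderiv j (P i))).re) := by
      ext a b
      cases a with
      | inl i =>
        cases b with
        | inl j =>
          show eval x (pderiv (Sum.inl j) (reP (phi (P i)))) = (eval z (pderiv j (P i))).re
          rw [pderiv_reP, pderiv_phi_inl]
          have h := (eval_reP x (phi (pderiv j (P i)))).1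
          rw [hW] at h
          exact_mod_cast h
        | inr j =>
          show eval x (pderiv (Sum.inr j) (reP (phi (P i)))) = -(eval z (pderiv j (P i))).im
          rw [pderiv_reP, pderiv_phi_inr]
          have h := (eval_reP x (C Complex.I * phi (pderiv j (P i)))).1
          rw [map_mul, eval_C, hW] at h
          have : (Complex.I * eval z (pderiv j (P i))).re = -(eval z (pderiv j (P i))).im := by
            simp
          rw [this] at h
          exact_mod_cast h
      | inr i =>
        cases b with
        | inl j =>
          show eval x (pderiv (Sum.inl j) (imP (phi (P i)))) = (eval z (pderiv j (P i))).im
          rw [pderiv_imP, pderiv_phi_inl]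
          have h := (eval_reP x (phi (pderiv j (P i)))).2
          rw [hW] at h
          exact_mod_cast h
        | inr j =>
          show eval x (pderiv (Sum.inr j) (imP (phi (P i)))) = (eval z (pderiv j (P i))).re
          rw [pderiv_imP, pderiv_phi_inr]
          have h := (eval_reP x (C Complex.I * phi (pderiv j (P i)))).2
          rw [map_mul, eval_C, hW] at h
          have : (Complex.I * eval z (pderiv j (P i))).im = (eval z (pderiv j (P i))).re := by
            simp
          rw [this] at h
          exact_mod_cast h
    rw [hM, det_blocks_r]
    have hsum : (Matrix.of fun i j => (eval z (pderiv j (P i))).re).map (fun a => (a : ℂ))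
        + Complex.I • (Matrix.of fun i j => (eval z (pderiv j (P i))).im).map (fun a => (a : ℂ))
        = Matrix.of fun i j => eval z (pderiv j (P i)) := by
      ext i j
      simp only [Matrix.add_apply, Matrix.smul_apply, Matrix.map_apply, Matrix.of_apply,
        smul_eq_mul]
      rw [mul_comm]
      exact Complex.re_add_im _
    rw [hsum, hjac z]
  -- transported Jacobian
  have hQ'jac : ∀ x' : Fin (2 * n) → ℝ,
      Matrix.det (Matrix.of fun s t => eval x' (pderiv t (Q' s))) = Complex.normSq c := by
    intro x'
    have hsub : (Matrix.of fun s t => eval x' (pderiv t (Q' s))) =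
        (Matrix.of fun a b => eval (fun s => x' (e s)) (pderiv b (Q a))).submatrix
          e.symm e.symm := by
      ext s t
      simp only [Matrix.submatrix_apply, Matrix.of_apply]
      show eval x' (pderiv t (rename e (Q (e.symm s)))) = _
      conv_lhs => rw [show t = e (e.symm t) from (e.apply_symm_apply t).symm]
      rw [pderiv_rename e.injective, eval_rename]
      rfl
    rw [hsub, Matrix.det_submatrix_equiv_self, hQjac]
  have hnsq : Complex.normSq c ≠ 0 := fun h => hc (by rwa [Complex.normSq_eq_zero] at h)
  have hinj := hreal Q' (Complex.normSq c) hnsq hQ'jac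
  -- now injectivity of the complex map
  intro z w hzw
  have hQeval : ∀ (z0 : Fin n → ℂ) (a : Fin n ⊕ Fin n),
      eval (Sum.elim (fun j => (z0 j).re) (fun j => (z0 j).im)) (Q a) =
      Sum.elim (fun i => (eval z0 (P i)).re) (fun i => (eval z0 (P i)).im) a := by
    intro z0 a
    set x0 : Fin n ⊕ Fin n → ℝ := Sum.elim (fun j => (z0 j).re) (fun j => (z0 j).im) with hx0
    have hx : (fun j => (x0 (Sum.inl j) : ℂ) + Complex.I * (x0 (Sum.inr j))) = z0 := by
      funext j
      simp only [hx0, Sum.elim_inl, Sum.elim_inr]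
      rw [mul_comm]
      exact Complex.re_add_im _
    cases a with
    | inl i =>
      show eval x0 (reP (phi (P i))) = (eval z0 (P i)).re
      have h := (eval_reP x0 (phi (P i))).1
      rw [eval_phi, hx] at h
      exact_mod_cast h
    | inr i =>
      show eval x0 (imP (phi (P i))) = (eval z0 (P i)).im
      have h := (eval_reP x0 (phi (P i))).2
      rw [eval_phi, hx] at h
      exact_mod_cast h
  set xz : Fin n ⊕ Fin n → ℝ := Sum.elim (fun j => (z j).re) (fun j => (z j).im) with hxz
  set xw : Fin n ⊕ Fin n → ℝ := Sum.elim (fun j => (w j).re) (fun j => (w j).im) with hxw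
  have key : (fun i => eval (fun s => xz (e.symm s)) (Q' i)) =
      (fun i => eval (fun s => xw (e.symm s)) (Q' i)) := by
    funext k
    show eval _ (rename e (Q (e.symm k))) = eval _ (rename e (Q (e.symm k)))
    rw [eval_rename, eval_rename]
    have h1 : ((fun s => xz (e.symm s)) ∘ e) = xz := funext fun s => by simp
    have h2 : ((fun s => xw (e.symm s)) ∘ e) = xw := funext fun s => by simp
    rw [h1, h2, hxz, hxw, hQeval, hQeval]
    cases e.symm k with
    | inl i => simp only [Sum.elim_inl]; exact congrArg Complex.re (congrFun hzw i)
    | inr i => simp only [Sum.elim_inr]; exact congrArg Complex.im (congrFun hzw i)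
  have hpt := hinj key
  have hxzw : xz = xw := by
    funext s
    have := congrFun hpt (e s)
    simpa using this
  funext j
  apply Complex.ext
  · exact congrFun hxzw (Sum.inl j)
  · exact congrFun hxzw (Sum.inr j)
end

section
/- Let n ≥ 2 and let F = I + H : ℝⁿ → ℝⁿ be a polynomial mapping of cubic homogeneous form (F_i(x) = x_i + H_i(x) with each H_i zero or homogeneous of degree 3) whose Jacobian determinant is a nonzero constant. Then F is globally injective at 0: F⁻¹({0}) = {0}, i.e. F(a) = 0 implies a = 0. -/
open MvPolynomial

/-- Evaluation of a homogeneous polynomial scales by `t ^ m`. -/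
lemma aux_eval_scale {n m : ℕ} {φ : MvPolynomial (Fin n) ℝ} (h : φ.IsHomogeneous m)
    (t : ℝ) (x : Fin n → ℝ) : eval (fun i => t * x i) φ = t ^ m * eval x φ := by
  rw [eval_eq, eval_eq, Finset.mul_sum]
  refine Finset.sum_congr rfl fun d hd => ?_
  have hdeg : ∑ i ∈ d.support, d i = m := by
    have hd' : d.degree = m := by
      by_contra h'
      exact (MvPolynomial.mem_support_iff.mp hd) (h.coeff_eq_zero h')
    simpa [Finsupp.degree_apply] using hd'
  calc coeff d φ * ∏ i ∈ d.support, (t * x i) ^ d i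
      = coeff d φ * ((∏ i ∈ d.support, t ^ d i) * ∏ i ∈ d.support, x i ^ d i) := by
        rw [← Finset.prod_mul_distrib]
        simp [mul_pow]
    _ = t ^ m * (coeff d φ * ∏ i ∈ d.support, x i ^ d i) := by
        rw [Finset.prod_pow_eq_pow_sum, hdeg]; ring

/-- Euler's identity for a single monomial. -/
lemma aux_euler_monomial {n : ℕ} (d : Fin n →₀ ℕ) (c : ℝ) :
    ∑ j : Fin n, X j * pderiv j (monomial d c) = C ((d.degree : ℝ)) * monomial d c := by
  have key : ∀ j : Fin n, X j * pderiv j (monomial d c) = monomial d (c * d j) := by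
    intro j
    rw [pderiv_monomial]
    by_cases hj : d j = 0
    · simp [hj]
    · rw [X, monomial_mul, one_mul]
      congr 1
      rw [add_tsub_cancel_of_le]
      exact Finsupp.single_le_iff.mpr (Nat.one_le_iff_ne_zero.mpr hj)
  simp_rw [key]
  rw [C_mul_monomial, ← map_sum (monomial d)]
  congr 1
  rw [← Finset.mul_sum]
  have : ∑ j : Fin n, (d j : ℝ) = (d.degree : ℝ) := by
    rw [Finsupp.degree_apply, Nat.cast_sum, Finset.sum_subset (Finset.subset_univ d.support)]
    intro x _ hx
    simp [Finsupp.notMem_support_iff.mp hx]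
  rw [this]; ring

/-- Euler's identity for homogeneous polynomials. -/
lemma aux_euler_poly {n m : ℕ} {φ : MvPolynomial (Fin n) ℝ} (h : φ.IsHomogeneous m) :
    ∑ j : Fin n, X j * pderiv j φ = C ((m : ℝ)) * φ := by
  conv_lhs => rw [φ.as_sum]
  conv_rhs => rw [φ.as_sum]
  rw [Finset.mul_sum]
  simp only [map_sum, Finset.mul_sum]
  rw [Finset.sum_comm]
  refine Finset.sum_congr rfl fun d hd => ?_
  have hdd : d.degree = m := by
    by_contra h'
    exact (MvPolynomial.mem_support_iff.mp hd) (h.coeff_eq_zero h')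
  rw [aux_euler_monomial, hdd]

/-- Let n ≥ 2 and let F = I + H : ℝⁿ → ℝⁿ be of cubic homogeneous form
(each Hᵢ zero or homogeneous of degree 3) with nonzero constant Jacobian determinant.
Then F is globally injective at 0: F(a) = 0 implies a = 0. -/
theorem stmt_12 (n : ℕ) (hn : 2 ≤ n) (H : Fin n → MvPolynomial (Fin n) ℝ)
    (hH : ∀ i, H i = 0 ∨ (H i).IsHomogeneous 3) (c : ℝ) (hc : c ≠ 0)
    (hJ : ∀ x : Fin n → ℝ,
      Matrix.det (Matrix.of fun i j => eval x (pderiv j (X i + H i))) = c)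
    (a : Fin n → ℝ) (ha : (fun i => eval a (X i + H i)) = 0) :
    a = 0 := by
  by_contra hne
  have hH' : ∀ i, (H i).IsHomogeneous 3 := fun i =>
    (hH i).elim (fun h => h ▸ isHomogeneous_zero _ _ _) id
  have haH : ∀ i, eval a (H i) = -a i := by
    intro i
    have h := congrFun ha i
    simp only [eval_add, eval_X, Pi.zero_apply] at h
    linarith
  set t : ℝ := Real.sqrt (1/3) with htdef
  have htpos : 0 < t := Real.sqrt_pos.mpr (by norm_num)
  have ht0 : t ≠ 0 := ne_of_gt htpos
  have ht2 : t ^ 2 = 1/3 := Real.sq_sqrt (by norm_num)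
  set x : Fin n → ℝ := fun i => t * a i with hxdef
  have hM : (Matrix.of fun i j => eval x (pderiv j (X i + H i))).mulVec a = 0 := by
    funext i
    simp only [Matrix.mulVec, dotProduct, Matrix.of_apply, Pi.zero_apply]
    have expand : ∀ j : Fin n,
        eval x (pderiv j (X i + H i)) = eval x (pderiv j (X i)) + eval x (pderiv j (H i)) := by
      intro j; rw [map_add, eval_add]
    -- sum from the identity part
    have h1 : ∑ j : Fin n, eval x (pderiv j (X i)) * a j = a i := by
      rw [Finset.sum_eq_single i]
      · simp
      · intro j _ hji
        rw [pderiv_X_of_ne (Ne.symm hji)]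
        simp
      · simp
    -- Euler at x for H i
    have he : ∑ j : Fin n, x j * eval x (pderiv j (H i)) = 3 * eval x (H i) := by
      have h := congrArg (eval x) (aux_euler_poly (hH' i))
      simpa [eval_mul] using h
    have hxH : eval x (H i) = t ^ 3 * eval a (H i) := aux_eval_scale (hH' i) t a
    have h2 : ∑ j : Fin n, eval x (pderiv j (H i)) * a j = -a i := by
      have h3 : t * ∑ j : Fin n, eval x (pderiv j (H i)) * a j
          = ∑ j : Fin n, x j * eval x (pderiv j (H i)) := by
        rw [Finset.mul_sum]
        refine Finset.sum_congr rfl fun j _ => ?_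
        simp only [hxdef]; ring
      have h4 : t * ∑ j : Fin n, eval x (pderiv j (H i)) * a j = t * (-a i) := by
        rw [h3, he, hxH, haH i]
        have : t ^ 3 = t * t ^ 2 := by ring
        rw [this, ht2]; ring
      exact mul_left_cancel₀ ht0 h4
    calc ∑ j : Fin n, eval x (pderiv j (X i + H i)) * a j
        = ∑ j : Fin n, (eval x (pderiv j (X i)) * a j + eval x (pderiv j (H i)) * a j) := by
          refine Finset.sum_congr rfl fun j _ => ?_
          rw [expand j]; ring
      _ = a i + -a i := by rw [Finset.sum_add_distrib, h1, h2]
      _ = 0 := by ring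
  have hdet : (Matrix.of fun i j => eval x (pderiv j (X i + H i))).det = 0 :=
    (Matrix.exists_mulVec_eq_zero_iff).mp ⟨a, hne, hM⟩
  exact hc (by rw [← hJ x, hdet])
end

section
/- Let F : ℝⁿ → ℝⁿ be a polynomial mapping of the form F = F₍₁₎ + F₍₃₎, where F₍₁₎ is linear (each component homogeneous of degree 1) and each component of F₍₃₎ is zero or homogeneous of degree 3. If F(a) = 0 for some a ∈ ℝⁿ, then JF(a/√3)·a = 0, where JF denotes the Jacobian matrix of F. Consequently, if det JF(x) ≠ 0 for all x ∈ ℝⁿ, then F(a) = 0 forces a = 0. -/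
open MvPolynomial

lemma prod_pow_single_add {n : ℕ} (x : Fin n → ℝ) (g : Fin n →₀ ℕ) (j : Fin n) :
    (∏ i, x i ^ ((g + Finsupp.single j 1 : Fin n →₀ ℕ) i)) = x j * ∏ i, x i ^ g i := by
  have h1 : (∏ i, x i ^ ((g + Finsupp.single j 1 : Fin n →₀ ℕ) i))
      = ∏ i, (x i ^ g i * x i ^ ((Finsupp.single j 1 : Fin n →₀ ℕ) i)) := by
    apply Finset.prod_congr rfl
    intro i _
    rw [Finsupp.add_apply, pow_add]
  rw [h1, Finset.prod_mul_distrib]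
  have h2 : (∏ i, x i ^ ((Finsupp.single j 1 : Fin n →₀ ℕ) i)) = x j := by
    rw [Finset.prod_eq_single j]
    · simp
    · intro b _ hb
      rw [Finsupp.single_eq_of_ne' (Ne.symm hb), pow_zero]
    · simp
  rw [h2]; ring

lemma euler_monomial {n : ℕ} (x : Fin n → ℝ) (m : Fin n →₀ ℕ) (r : ℝ) :
    ∑ j, x j * eval x (pderiv j (monomial m r)) = (m.degree : ℝ) * eval x (monomial m r) := by
  simp only [pderiv_monomial, eval_monomial, Finsupp.prod_pow]
  have hdeg : (m.degree : ℝ) = ∑ j, (m j : ℝ) := by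
    rw [Finsupp.degree_apply]
    rw [Finset.sum_subset (Finset.subset_univ m.support)]
    · push_cast; rfl
    · intro i _ hi; simpa using Finsupp.notMem_support_iff.mp hi
  rw [hdeg, Finset.sum_mul]
  apply Finset.sum_congr rfl
  intro j _
  rcases Nat.eq_zero_or_pos (m j) with h0 | hpos
  · simp [h0]
  · have hle : Finsupp.single j 1 ≤ m := by
      rw [Finsupp.single_le_iff]; exact hpos
    have hmm : (m - Finsupp.single j 1) + Finsupp.single j 1 = m := tsub_add_cancel_of_le hle
    calc x j * (r * ↑(m j) * ∏ i, x i ^ ((m - Finsupp.single j 1 : Fin n →₀ ℕ) i))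
        = (m j : ℝ) * (r * (x j * ∏ i, x i ^ ((m - Finsupp.single j 1 : Fin n →₀ ℕ) i))) := by
          ring
      _ = (m j : ℝ) * (r * ∏ i, x i ^ m i) := by
          rw [← prod_pow_single_add x (m - Finsupp.single j 1) j, hmm]

lemma euler {n d : ℕ} {φ : MvPolynomial (Fin n) ℝ} (hφ : φ.IsHomogeneous d)
    (x : Fin n → ℝ) :
    ∑ j, x j * eval x (pderiv j φ) = (d : ℝ) * eval x φ := by
  conv_lhs => rw [φ.as_sum]
  conv_rhs => rw [φ.as_sum]
  simp only [map_sum, Finset.mul_sum]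
  rw [Finset.sum_comm]
  apply Finset.sum_congr rfl
  intro m hm
  rw [euler_monomial]
  congr 2
  rw [Finsupp.degree_eq_weight_one]
  exact hφ (mem_support_iff.mp hm)

lemma eval_smul_homog {n d : ℕ} {φ : MvPolynomial (Fin n) ℝ} (hφ : φ.IsHomogeneous d)
    (c : ℝ) (x : Fin n → ℝ) :
    eval (c • x) φ = c ^ d * eval x φ := by
  rw [eval_eq', eval_eq', Finset.mul_sum]
  apply Finset.sum_congr rfl
  intro m hm
  have hdeg : ∑ i, m i = d := by
    have := hφ (mem_support_iff.mp hm)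
    change (Finsupp.weight (fun _ => (1:ℕ))) m = d at this
    rw [← Finsupp.degree_eq_weight_one] at this
    rw [← this, Finsupp.degree_apply, Finset.sum_subset (Finset.subset_univ m.support)]
    intro i _ hi; simpa using Finsupp.notMem_support_iff.mp hi
  have key : (∏ i, (c • x) i ^ m i) = c ^ d * ∏ i, x i ^ m i := by
    simp only [Pi.smul_apply, smul_eq_mul, mul_pow]
    rw [Finset.prod_mul_distrib, Finset.prod_pow_eq_pow_sum, hdeg]
  rw [key]; ring

lemma helper {n d : ℕ} {φ : MvPolynomial (Fin n) ℝ} (hφ : φ.IsHomogeneous d)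
    (c : ℝ) (a : Fin n → ℝ) :
    c * ∑ j, a j * eval (c • a) (pderiv j φ) = d * c ^ d * eval a φ := by
  have h := euler hφ (c • a)
  rw [eval_smul_homog hφ c a] at h
  rw [Finset.mul_sum, show (d:ℝ) * c ^ d * eval a φ = (d:ℝ) * (c ^ d * eval a φ) by ring, ← h]
  apply Finset.sum_congr rfl
  intro j _
  simp only [Pi.smul_apply, smul_eq_mul]
  ring


/-- Let F : ℝⁿ → ℝⁿ be a polynomial mapping of the form F = F₍₁₎ + F₍₃₎,
with each component of F₍₁₎ homogeneous of degree 1 and each component of F₍₃₎ zero or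
homogeneous of degree 3. If F(a) = 0 then JF(a/√3)·a = 0; consequently, if det JF(x) ≠ 0
for all x, then F(a) = 0 forces a = 0. -/
theorem stmt_13 (n : ℕ) (P₁ P₃ : Fin n → MvPolynomial (Fin n) ℝ)
    (h1 : ∀ i, (P₁ i).IsHomogeneous 1)
    (h3 : ∀ i, P₃ i = 0 ∨ (P₃ i).IsHomogeneous 3) :
    (∀ a : Fin n → ℝ, (fun i => eval a (P₁ i + P₃ i)) = 0 →
      Matrix.mulVec
        (Matrix.of fun i j =>
          eval ((Real.sqrt 3)⁻¹ • a) (pderiv j (P₁ i + P₃ i))) a = 0) ∧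
    ((∀ x : Fin n → ℝ,
        Matrix.det (Matrix.of fun i j => eval x (pderiv j (P₁ i + P₃ i))) ≠ 0) →
      ∀ a : Fin n → ℝ, (fun i => eval a (P₁ i + P₃ i)) = 0 → a = 0) := by
  have h3' : ∀ i, (P₃ i).IsHomogeneous 3 := fun i =>
    (h3 i).elim (fun h => h ▸ isHomogeneous_zero _ _ 3) id
  have hc : (Real.sqrt 3)⁻¹ ≠ 0 := by
    simp [Real.sqrt_ne_zero']
  have hc2 : ((Real.sqrt 3)⁻¹) ^ 2 = 3⁻¹ := by
    rw [← Real.sqrt_inv, Real.sq_sqrt (by norm_num)]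
  set c : ℝ := (Real.sqrt 3)⁻¹ with hcdef
  have main : ∀ a : Fin n → ℝ, (fun i => eval a (P₁ i + P₃ i)) = 0 →
      Matrix.mulVec
        (Matrix.of fun i j => eval (c • a) (pderiv j (P₁ i + P₃ i))) a = 0 := by
    intro a ha
    funext i
    have hai : eval a (P₁ i) + eval a (P₃ i) = 0 := by
      have := congrFun ha i
      simpa using this
    have e1 : c * ∑ j, a j * eval (c • a) (pderiv j (P₁ i))
        = c * eval a (P₁ i) := by
      rw [helper (h1 i) c a]; ring
    have e3 : c * ∑ j, a j * eval (c • a) (pderiv j (P₃ i))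
        = c * eval a (P₃ i) := by
      rw [helper (h3' i) c a]
      have : (3 : ℝ) * c ^ 3 = c * 1 := by
        have : c ^ 3 = c ^ 2 * c := by ring
        rw [this, hc2]; ring
      calc (3 : ℝ) * c ^ 3 * eval a (P₃ i) = ((3:ℝ) * c ^ 3) * eval a (P₃ i) := by ring
        _ = (c * 1) * eval a (P₃ i) := by rw [this]
        _ = c * eval a (P₃ i) := by ring
    have s1 := mul_left_cancel₀ hc e1
    have s3 := mul_left_cancel₀ hc e3
    simp only [Matrix.mulVec, dotProduct, Matrix.of_apply, map_add, eval_add,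
      Pi.zero_apply]
    calc ∑ j, (eval (c • a) (pderiv j (P₁ i)) + eval (c • a) (pderiv j (P₃ i))) * a j
        = (∑ j, a j * eval (c • a) (pderiv j (P₁ i)))
          + ∑ j, a j * eval (c • a) (pderiv j (P₃ i)) := by
          rw [← Finset.sum_add_distrib]; apply Finset.sum_congr rfl; intros; ring
      _ = eval a (P₁ i) + eval a (P₃ i) := by rw [s1, s3]
      _ = 0 := hai
  refine ⟨main, fun hdet a ha => ?_⟩
  have hM := main a ha
  set M : Matrix (Fin n) (Fin n) ℝ :=
    Matrix.of fun i j => eval (c • a) (pderiv j (P₁ i + P₃ i)) with hMdef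
  have hdM : IsUnit M.det := (Ne.isUnit (hdet (c • a)))
  have hinv : M⁻¹ * M = 1 := Matrix.nonsing_inv_mul M hdM
  calc a = (1 : Matrix (Fin n) (Fin n) ℝ).mulVec a := by rw [Matrix.one_mulVec]
    _ = (M⁻¹ * M).mulVec a := by rw [hinv]
    _ = M⁻¹.mulVec (M.mulVec a) := by rw [← Matrix.mulVec_mulVec]
    _ = M⁻¹.mulVec 0 := by rw [hM]
    _ = 0 := Matrix.mulVec_zero _
end
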